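/- For every α, β ∈ [0,1] and every (l₀, l₁) ∈ ℝ², the statistical parity gap of Algorithm 2's classifier satisfies G(l₀,l₁) ≤ |α̃ − α| + |β̃ − β| ≤ |l₀| + |l₁|, where α̃ = [α+l₀]₀¹ and β̃ = [β+l₁]₀¹. -/
import Mathlib


/-- Projection onto `[0,1]`. -/
noncomputable def clip (x : ℝ) : ℝ := min (max x 0) 1

/-- The statistical parity gap of Algorithm 2's classifier as a function of the Laplace
noise realizations `(l₀, l₁)`, with clipped perturbed rates `α̃ = [α+l₀]₀¹`,
`β̃ = [β+l₁]₀¹` (division by zero yields `0`, as in Lean's convention). -/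
noncomputable def G (α β l₀ l₁ : ℝ) : ℝ :=
  let αt := clip (α + l₀)
  let βt := clip (β + l₁)
  if βt ≤ αt then
    |α * (αt + βt) / (2 * αt) - β - (1 - β) * (αt - βt) / (2 * (1 - βt))|
  else
    |β * (αt + βt) / (2 * βt) - α - (1 - α) * (βt - αt) / (2 * (1 - αt))|

lemma clip_mem (x : ℝ) : 0 ≤ clip x ∧ clip x ≤ 1 := by
  unfold clip
  constructor
  · exact le_min (le_max_right _ _) zero_le_one
  · exact min_le_right _ _

lemma clip_close (α l : ℝ) (h0 : 0 ≤ α) (h1 : α ≤ 1) : |clip (α + l) - α| ≤ |l| := by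
  have h1l := le_abs_self l
  have h2l := neg_abs_le l
  unfold clip
  rw [abs_le]
  rcases le_total (α + l) 0 with h | h
  · rw [max_eq_right h, min_eq_left zero_le_one]
    constructor <;> linarith
  · rw [max_eq_left h]
    rcases le_total (α + l) 1 with h' | h'
    · rw [min_eq_left h']
      constructor <;> linarith
    · rw [min_eq_right h']
      constructor <;> linarith

lemma key (α β a b : ℝ) (ha0 : 0 ≤ a) (ha1 : a ≤ 1) (hb0 : 0 ≤ b) (hb1 : b ≤ 1)
    (hba : b ≤ a) :
    |α * (a + b) / (2 * a) - β - (1 - β) * (a - b) / (2 * (1 - b))| ≤ |a - α| + |b - β| := by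
  rcases eq_or_lt_of_le ha0 with ha | ha
  · -- a = 0, hence b = 0
    have hb : b = 0 := le_antisymm (hba.trans ha.symm.le) hb0
    subst hb
    rw [← ha]
    simp only [add_zero, mul_zero, zero_div, sub_zero, sub_self, zero_mul,
      zero_sub, abs_neg]
    have := abs_nonneg α
    have := abs_nonneg β
    linarith
  rcases eq_or_lt_of_le hb1 with hb | hb
  · -- b = 1, hence a = 1
    have haa : a = 1 := le_antisymm ha1 (hb ▸ hba)
    subst haa
    subst hb
    have e1 : α * (1 + 1) / (2 * 1) = α := by ring
    have e2 : (1 - β) * (1 - 1) / (2 * (1 - 1)) = 0 := by norm_num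
    rw [e1, e2, sub_zero]
    calc |α - β| = |(α - 1) + (1 - β)| := by ring_nf
      _ ≤ |α - 1| + |1 - β| := abs_add_le _ _
      _ = |1 - α| + |1 - β| := by rw [abs_sub_comm]
  -- main case: 0 < a, b < 1
  have hb1' : (0:ℝ) < 1 - b := by linarith
  have ha' : a ≠ 0 := ne_of_gt ha
  have hb' : (1:ℝ) - b ≠ 0 := ne_of_gt hb1'
  set t : ℝ := (a + b) / (2 * a) with ht
  set s : ℝ := (2 - a - b) / (2 * (1 - b)) with hs
  have ht0 : 0 ≤ t := by positivity
  have ht1 : t ≤ 1 := by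
    rw [ht, div_le_one (by linarith : (0:ℝ) < 2 * a)]
    linarith
  have hs0 : 0 ≤ s := by
    apply div_nonneg (by linarith) (by linarith)
  have hs1 : s ≤ 1 := by
    rw [hs, div_le_one (by linarith : (0:ℝ) < 2 * (1 - b))]
    linarith
  have heq : α * (a + b) / (2 * a) - β - (1 - β) * (a - b) / (2 * (1 - b))
      = (α - a) * t + (b - β) * s := by
    rw [ht, hs]
    field_simp
    ring
  rw [heq]
  calc |(α - a) * t + (b - β) * s| ≤ |(α - a) * t| + |(b - β) * s| := abs_add_le _ _
    _ ≤ |α - a| + |b - β| := by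
        rw [abs_mul, abs_mul]
        have h1 : |t| ≤ 1 := abs_le.2 ⟨by linarith, ht1⟩
        have h2 : |s| ≤ 1 := abs_le.2 ⟨by linarith, hs1⟩
        have := abs_nonneg (α - a)
        have := abs_nonneg (b - β)
        nlinarith [abs_nonneg t, abs_nonneg s]
    _ = |a - α| + |b - β| := by rw [abs_sub_comm]

/-- The statistical parity gap of Algorithm 2's classifier is bounded by the sum of the
clipped noise magnitudes, which is in turn bounded by `|l₀| + |l₁|`. -/
theorem algorithm2_gap_le_noise
    (α β : ℝ) (hα : α ∈ Set.Icc (0:ℝ) 1) (hβ : β ∈ Set.Icc (0:ℝ) 1) (l₀ l₁ : ℝ) :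
    G α β l₀ l₁ ≤ |clip (α + l₀) - α| + |clip (β + l₁) - β| ∧
      |clip (α + l₀) - α| + |clip (β + l₁) - β| ≤ |l₀| + |l₁| := by
  obtain ⟨hα0, hα1⟩ := hα
  obtain ⟨hβ0, hβ1⟩ := hβ
  obtain ⟨hat0, hat1⟩ := clip_mem (α + l₀)
  obtain ⟨hbt0, hbt1⟩ := clip_mem (β + l₁)
  constructor
  · unfold G
    set a := clip (α + l₀)
    set b := clip (β + l₁)
    by_cases h : b ≤ a
    · simp only [h, if_true]
      exact key α β a b hat0 hat1 hbt0 hbt1 h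
    · simp only [h, if_false]
      push_neg at h
      have := key β α b a hbt0 hbt1 hat0 hat1 h.le
      calc |β * (a + b) / (2 * b) - α - (1 - α) * (b - a) / (2 * (1 - a))|
          = |β * (b + a) / (2 * b) - α - (1 - α) * (b - a) / (2 * (1 - a))| := by
            rw [add_comm a b]
        _ ≤ |b - β| + |a - α| := this
        _ = |a - α| + |b - β| := add_comm _ _
  · exact add_le_add (clip_close α l₀ hα0 hα1) (clip_close β l₁ hβ0 hβ1)
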